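/- arXiv:2101.01291 — 2 statements merged into one kernel-verified Lean document; each statement's English description precedes it below -/
import Mathlib

section
/- Let f be a meromorphic function on ℂ whose divisor is contained in the closed left half-plane {Re s ≤ 0} (f is LLD), and suppose G is a meromorphic LLD function satisfying G(s+1) = f(s)G(s). Then for every ρ ∈ ℂ, the order of G at ρ equals -∑_{k=0}^{∞} n_{ρ+k}(f), where n_w(f) denotes the order of f at w (multiplicity of a zero, negative multiplicity of a pole, or 0), and the sum has only finitely many nonzero terms. -/
open Complex Filter Set

noncomputable section

/-- An entire function of finite order: differentiable on `ℂ` with growth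
bounded by `C · exp(‖z‖ ^ ρ)`. -/
def FiniteOrderEntire (g : ℂ → ℂ) : Prop :=
  Differentiable ℂ g ∧ ∃ C ρ : ℝ, ∀ z : ℂ, ‖g z‖ ≤ C * Real.exp (‖z‖ ^ ρ)

/-- A meromorphic function of finite order: a ratio of two entire functions of
finite order (with the convention that the value at a pole is the junk value `0`,
coming from division by zero). -/
def FiniteOrderMero (f : ℂ → ℂ) : Prop :=
  ∃ g h : ℂ → ℂ, FiniteOrderEntire g ∧ FiniteOrderEntire h ∧ (∃ z, h z ≠ 0) ∧
    ∀ z, f z = g z / h z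

/-- A "nice" meromorphic function: at every point it is either analytic or it has a
genuine pole, at which the assigned (junk) value is `0`. -/
def IsMeroNice (f : ℂ → ℂ) : Prop :=
  ∀ s : ℂ, AnalyticAt ℂ f s ∨
    (Tendsto (fun z => ‖f z‖) (nhdsWithin s {s}ᶜ) atTop ∧ f s = 0)

/-- A finite order meromorphic function on `ℂ`. -/
def MeroFO (f : ℂ → ℂ) : Prop := FiniteOrderMero f ∧ IsMeroNice f

/-- Left Located Divisor: no zeros nor poles in the right half plane `ℂ₊`. -/
def LLD (f : ℂ → ℂ) : Prop := ∀ s : ℂ, 0 < s.re → AnalyticAt ℂ f s ∧ f s ≠ 0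

/-- Real analytic: `f` commutes with complex conjugation. -/
def RealAnalytic (f : ℂ → ℂ) : Prop :=
  ∀ s, f (starRingEnd ℂ s) = starRingEnd ℂ (f s)

/-- `f` has order exactly `m` at `ρ` (positive for zeros, negative for poles, `0`
if neither). -/
def ordAt (f : ℂ → ℂ) (ρ : ℂ) (m : ℤ) : Prop :=
  ∃ g : ℂ → ℂ, AnalyticAt ℂ g ρ ∧ g ρ ≠ 0 ∧
    ∀ᶠ z in nhdsWithin ρ {ρ}ᶜ, f z = (z - ρ) ^ m * g z

lemma ordAt_unique {F : ℂ → ℂ} {w : ℂ} {m m' : ℤ}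
    (h : ordAt F w m) (h' : ordAt F w m') : m = m' := by
  by_contra hne
  wlog hlt : m < m' generalizing m m'
  · exact this h' h (Ne.symm hne) (by omega)
  obtain ⟨g, hg, hg0, hev⟩ := h
  obtain ⟨g', hg', hg0', hev'⟩ := h'
  have hmem : ∀ᶠ z in nhdsWithin w {w}ᶜ, z ≠ w :=
    eventually_mem_nhdsWithin.mono (fun z hz => hz)
  set d : ℕ := (m' - m).toNat with hd
  have hdm : m' - m = (d : ℤ) := by omega
  have key : ∀ᶠ z in nhdsWithin w {w}ᶜ, g z = (z - w) ^ d * g' z := by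
    filter_upwards [hev, hev', hmem] with z h1 h2 h3
    have hz : z - w ≠ 0 := sub_ne_zero.2 h3
    have e : (z - w) ^ m * g z = (z - w) ^ m * ((z - w) ^ (d : ℕ) * g' z) := by
      rw [← h1, h2, ← mul_assoc, ← zpow_natCast (z - w) d, ← zpow_add₀ hz, ← hdm]
      ring_nf
    exact mul_left_cancel₀ (zpow_ne_zero m hz) e
  have hlim1 : Tendsto g (nhdsWithin w {w}ᶜ) (nhds (g w)) :=
    (hg.continuousAt.tendsto).mono_left nhdsWithin_le_nhds
  have hlim2 : Tendsto (fun z => (z - w) ^ d * g' z) (nhdsWithin w {w}ᶜ) (nhds 0) := by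
    have hc : ContinuousAt (fun z => (z - w) ^ d * g' z) w :=
      (((continuous_id.sub continuous_const).pow d).continuousAt).mul hg'.continuousAt
    have : ((w : ℂ) - w) ^ d * g' w = 0 := by
      have hd1 : 1 ≤ d := by omega
      simp [zero_pow (by omega : d ≠ 0)]
    exact (this ▸ hc.tendsto).mono_left nhdsWithin_le_nhds
  have : g w = 0 := tendsto_nhds_unique hlim1 (hlim2.congr' (key.mono fun z hz => hz.symm))
  exact hg0 this

lemma ordAt_shift {f G : ℂ → ℂ} {ρ : ℂ} {a b : ℤ}
    (hfe : ∀ s : ℂ, f s ≠ 0 → G s ≠ 0 → G (s + 1) = f s * G s)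
    (hfa : ordAt f ρ a) (hGb : ordAt G ρ b) : ordAt G (ρ + 1) (a + b) := by
  obtain ⟨g, hg, hg0, hev⟩ := hfa
  obtain ⟨h, hh, hh0, hev'⟩ := hGb
  have hmem : ∀ᶠ z in nhdsWithin ρ {ρ}ᶜ, z ≠ ρ :=
    eventually_mem_nhdsWithin.mono (fun z hz => hz)
  have hgne : ∀ᶠ z in nhdsWithin ρ {ρ}ᶜ, g z ≠ 0 :=
    (hg.continuousAt.eventually_ne hg0).filter_mono nhdsWithin_le_nhds
  have hhne : ∀ᶠ z in nhdsWithin ρ {ρ}ᶜ, h z ≠ 0 :=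
    (hh.continuousAt.eventually_ne hh0).filter_mono nhdsWithin_le_nhds
  have key : ∀ᶠ z in nhdsWithin ρ {ρ}ᶜ,
      G (z + 1) = (z - ρ) ^ (a + b) * (g z * h z) := by
    filter_upwards [hev, hev', hmem, hgne, hhne] with z h1 h2 h3 h4 h5
    have hz : z - ρ ≠ 0 := sub_ne_zero.2 h3
    have hfz : f z ≠ 0 := by rw [h1]; exact mul_ne_zero (zpow_ne_zero _ hz) h4
    have hGz : G z ≠ 0 := by rw [h2]; exact mul_ne_zero (zpow_ne_zero _ hz) h5
    rw [hfe z hfz hGz, h1, h2, zpow_add₀ hz]; ring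
  -- transfer along w ↦ w - 1
  have hT : Tendsto (fun w : ℂ => w - 1) (nhdsWithin (ρ + 1) {ρ + 1}ᶜ)
      (nhdsWithin ρ {ρ}ᶜ) := by
    apply tendsto_nhdsWithin_of_tendsto_nhds_of_eventually_within
    · have : ContinuousAt (fun w : ℂ => w - 1) (ρ + 1) :=
        (continuous_id.sub continuous_const).continuousAt
      have h2 : Tendsto (fun w : ℂ => w - 1) (nhdsWithin (ρ + 1) {ρ + 1}ᶜ)
          (nhds (ρ + 1 - 1)) := (this.tendsto).mono_left nhdsWithin_le_nhds
      simpa using h2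
    · exact eventually_mem_nhdsWithin.mono (fun w hw => by
        simp only [Set.mem_compl_iff, Set.mem_singleton_iff] at hw ⊢
        intro hc; exact hw (by linear_combination hc))
  have hφ : AnalyticAt ℂ (fun w : ℂ => w - 1) (ρ + 1) := analyticAt_id.sub analyticAt_const
  have hg1 : AnalyticAt ℂ (fun w : ℂ => g (w - 1)) (ρ + 1) := by
    have hc : AnalyticAt ℂ (g ∘ fun w : ℂ => w - 1) (ρ + 1) := by
      apply AnalyticAt.comp _ hφ
      simpa using hg
    exact hc
  have hh1 : AnalyticAt ℂ (fun w : ℂ => h (w - 1)) (ρ + 1) := by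
    have hc : AnalyticAt ℂ (h ∘ fun w : ℂ => w - 1) (ρ + 1) := by
      apply AnalyticAt.comp _ hφ
      simpa using hh
    exact hc
  refine ⟨fun w => g (w - 1) * h (w - 1), hg1.mul hh1, ?_, ?_⟩
  · simp only [add_sub_cancel_right]
    exact mul_ne_zero hg0 hh0
  · have := hT.eventually key
    refine this.mono fun w hw => ?_
    have h1 : w - 1 + 1 = w := by ring
    rw [h1] at hw
    rw [hw]
    congr 2
    ring

/-- If `f` is meromorphic with LLD divisor `n` and `G` is a meromorphic LLD function
satisfying `G (s+1) = f s · G s`, then the order of `G` at any `ρ` is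
`-∑_{k≥0} n (ρ + k)`, the sum having finitely many nonzero terms. -/
theorem divisor_determination (f G : ℂ → ℂ) (n : ℂ → ℤ)
    (hf : ∀ w : ℂ, ordAt f w (n w))
    (hfLLD : ∀ w : ℂ, 0 < w.re → n w = 0)
    (hG : ∀ w : ℂ, ∃ m : ℤ, ordAt G w m)
    (hGLLD : ∀ w : ℂ, 0 < w.re → ordAt G w 0)
    (hfe : ∀ s : ℂ, f s ≠ 0 → G s ≠ 0 → G (s + 1) = f s * G s) :
    ∀ ρ : ℂ, (Function.support fun k : ℕ => n (ρ + (k : ℂ))).Finite ∧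
      ordAt G ρ (-∑ᶠ k : ℕ, n (ρ + (k : ℂ))) := by
  intro ρ
  obtain ⟨N, hN⟩ : ∃ N : ℕ, 0 < ρ.re + N := by
    refine ⟨⌈-ρ.re⌉₊ + 1, ?_⟩
    have := Nat.le_ceil (-ρ.re)
    push_cast
    linarith
  have hvanish : ∀ k : ℕ, N ≤ k → n (ρ + (k : ℂ)) = 0 := by
    intro k hk
    apply hfLLD
    simp only [Complex.add_re, Complex.natCast_re]
    have : (N : ℝ) ≤ (k : ℝ) := by exact_mod_cast hk
    linarith
  have hsub : (Function.support fun k : ℕ => n (ρ + (k : ℂ))) ⊆ ↑(Finset.range N) := by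
    intro k hk
    simp only [Function.mem_support] at hk
    simp only [Finset.coe_range, Set.mem_Iio]
    by_contra hkN
    exact hk (hvanish k (by omega))
  have hfin : (Function.support fun k : ℕ => n (ρ + (k : ℂ))).Finite :=
    Set.Finite.subset (Finset.range N).finite_toSet hsub
  refine ⟨hfin, ?_⟩
  have hsum : ∑ᶠ k : ℕ, n (ρ + (k : ℂ)) = ∑ k ∈ Finset.range N, n (ρ + (k : ℂ)) :=
    finsum_eq_finset_sum_of_support_subset _ hsub
  obtain ⟨m, hm⟩ := hG ρ
  have hstep : ∀ M : ℕ, ordAt G (ρ + M) (m + ∑ k ∈ Finset.range M, n (ρ + (k : ℂ))) := by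
    intro M
    induction M with
    | zero => simpa using hm
    | succ M ih =>
      have h1 := ordAt_shift hfe (hf (ρ + M)) ih
      have heq : ρ + ((M : ℂ) + 1) = (ρ + M) + 1 := by ring
      have hint : (m + ∑ k ∈ Finset.range (M + 1), n (ρ + (k : ℂ)))
          = n (ρ + M) + (m + ∑ k ∈ Finset.range M, n (ρ + (k : ℂ))) := by
        rw [Finset.sum_range_succ]; ring
      rw [hint]
      push_cast
      rw [heq]
      exact h1
  have hN' := hstep N
  have h0 : ordAt G (ρ + N) 0 := hGLLD _ (by simp [Complex.add_re]; linarith)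
  have : m + ∑ k ∈ Finset.range N, n (ρ + (k : ℂ)) = 0 := ordAt_unique hN' h0
  have hmval : m = -∑ᶠ k : ℕ, n (ρ + (k : ℂ)) := by rw [hsum]; omega
  rwa [hmval] at hm
end
end

section
/- The divisor of the N-th Barnes higher Gamma function Γ_N is supported on the non-positive integers, and the order of Γ_N at s = -n (n ≥ 0) equals -binom(n+N-1, N-1). -/
open Complex Filter Set Topology

noncomputable section

/-- A Barnes higher Gamma hierarchy: `G 0 s = s⁻¹`, each `G N` (for `N ≥ 1`) a
finite order, LLD, real analytic meromorphic function with `G N 1 = 1`,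
satisfying `G (N+1) (s+1) = (G N s)⁻¹ G (N+1) s`. -/
def BarnesHier (G : ℕ → ℂ → ℂ) : Prop :=
  (∀ s : ℂ, G 0 s = s⁻¹) ∧
    ∀ N : ℕ, MeroFO (G (N + 1)) ∧ LLD (G (N + 1)) ∧ RealAnalytic (G (N + 1)) ∧
      G (N + 1) 1 = 1 ∧
      ∀ s : ℂ, G N s ≠ 0 → G (N + 1) s ≠ 0 →
        G (N + 1) (s + 1) = (G N s)⁻¹ * G (N + 1) s


/-- Shift of punctured neighborhoods. -/
lemma BHaux.tendsto_shift (ρ : ℂ) : Tendsto (fun z : ℂ => z + 1) (𝓝[≠] ρ) (𝓝[≠] (ρ + 1)) := by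
  rw [tendsto_nhdsWithin_iff]
  constructor
  · exact ((continuous_id.add continuous_const).tendsto ρ).mono_left nhdsWithin_le_nhds
  · filter_upwards [self_mem_nhdsWithin] with z hz
    simp only [mem_compl_iff, mem_singleton_iff] at hz ⊢
    exact fun h => hz (by linear_combination h)

/-- An entire function which is somewhere nonzero is eventually nonzero on every
punctured neighborhood. -/
lemma BHaux.entire_ne {g : ℂ → ℂ} (hg : Differentiable ℂ g) {z₀ : ℂ} (h0 : g z₀ ≠ 0)
    (ρ : ℂ) : ∀ᶠ z in 𝓝[≠] ρ, g z ≠ 0 := by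
  rcases (hg.analyticAt ρ).eventually_eq_zero_or_eventually_ne_zero with h | h
  · exact absurd (AnalyticOnNhd.eqOn_zero_of_preconnected_of_eventuallyEq_zero
      (fun z _ => hg.analyticAt z) isPreconnected_univ (mem_univ ρ) h (mem_univ z₀)) h0
  · exact h

lemma BHaux.mero_ne {f : ℂ → ℂ} (hf : FiniteOrderMero f) (h1 : f 1 ≠ 0) (ρ : ℂ) :
    ∀ᶠ z in 𝓝[≠] ρ, f z ≠ 0 := by
  obtain ⟨g, h, ⟨hgd, -⟩, ⟨hhd, -⟩, -, hfgh⟩ := hf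
  have hg1 : g 1 ≠ 0 := fun h0 => h1 (by rw [hfgh, h0, zero_div])
  have hh1 : h 1 ≠ 0 := fun h0 => h1 (by rw [hfgh, h0, div_zero])
  filter_upwards [BHaux.entire_ne hgd hg1 ρ, BHaux.entire_ne hhd hh1 ρ] with z hz1 hz2
  rw [hfgh]; exact div_ne_zero hz1 hz2

lemma BHaux.ordAt_of_analytic {f : ℂ → ℂ} {ρ : ℂ} (hf : AnalyticAt ℂ f ρ) (h0 : f ρ ≠ 0) :
    ordAt f ρ 0 :=
  ⟨f, hf, h0, by filter_upwards with z; rw [zpow_zero, one_mul]⟩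

lemma BHaux.ordAt_ne {f : ℂ → ℂ} {ρ : ℂ} {m : ℤ} (h : ordAt f ρ m) :
    ∀ᶠ z in 𝓝[≠] ρ, f z ≠ 0 := by
  obtain ⟨g, hg, hgρ, hev⟩ := h
  have : ∀ᶠ z in 𝓝[≠] ρ, g z ≠ 0 :=
    (hg.continuousAt.eventually_ne hgρ).filter_mono nhdsWithin_le_nhds
  filter_upwards [hev, this, self_mem_nhdsWithin] with z h1 h2 h3
  rw [h1]
  exact mul_ne_zero (zpow_ne_zero _ (sub_ne_zero.mpr h3)) h2

/-- The local-form multiplication lemma: if `f z = A z * B (z+1)` near `ρ` (punctured),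
`A` has order `m₁` at `ρ` and `B` has order `m₂` at `ρ + 1`, then `f` has order `m₁ + m₂`. -/
lemma BHaux.analytic_shift {b : ℂ → ℂ} {ρ : ℂ} (hb : AnalyticAt ℂ b (ρ + 1)) :
    AnalyticAt ℂ (fun z => b (z + 1)) ρ := by
  have h1 : AnalyticAt ℂ (fun z : ℂ => z + 1) ρ := (analyticAt_id).add analyticAt_const
  exact AnalyticAt.comp (f := fun z : ℂ => z + 1) (x := ρ) hb h1

lemma BHaux.ordAt_mul_shift {f A B : ℂ → ℂ} {ρ : ℂ} {m₁ m₂ : ℤ}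
    (hA : ordAt A ρ m₁) (hB : ordAt B (ρ + 1) m₂)
    (hfe : ∀ᶠ z in 𝓝[≠] ρ, f z = A z * B (z + 1)) : ordAt f ρ (m₁ + m₂) := by
  obtain ⟨a, ha, ha0, hae⟩ := hA
  obtain ⟨b, hb, hb0, hbe⟩ := hB
  refine ⟨fun z => a z * b (z + 1), ha.mul (BHaux.analytic_shift hb), ?_, ?_⟩
  · exact mul_ne_zero ha0 hb0
  · filter_upwards [hfe, hae, (BHaux.tendsto_shift ρ).eventually hbe, self_mem_nhdsWithin]
      with z h1 h2 h3 h4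
    have hzρ : z - ρ ≠ 0 := sub_ne_zero.mpr h4
    rw [h1, h2, h3]
    have : z + 1 - (ρ + 1) = z - ρ := by ring
    rw [this, zpow_add₀ hzρ]
    ring


/-- The order of `Γ_N` at `-n`. -/
def BHaux.ordZ : ℕ → ℕ → ℤ
  | 0, 0 => -1
  | 0, _ + 1 => 0
  | N + 1, n => -(Nat.choose (n + N) N : ℤ)

lemma BHaux.ordZ_succ (N n : ℕ) :
    BHaux.ordZ (N + 1) n = BHaux.ordZ N n + (if n = 0 then 0 else BHaux.ordZ (N + 1) (n - 1)) := by
  rcases n with _ | k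
  · rcases N with _ | M <;> simp [BHaux.ordZ, Nat.choose_self]
  · rcases N with _ | M
    · simp [BHaux.ordZ]
    · have e1 : k + 1 + (M + 1) = (k + (M + 1)) + 1 := by omega
      have e2 : k + 1 + M = k + (M + 1) := by omega
      simp only [BHaux.ordZ, Nat.succ_ne_zero, if_false, Nat.add_sub_cancel, e1, e2,
        Nat.choose_succ_succ]
      push_cast
      ring

lemma BHaux.key (G : ℕ → ℂ → ℂ) (hG : BarnesHier G) (N : ℕ) :
    (∀ s : ℂ, (∀ n : ℕ, s ≠ -(n : ℂ)) → AnalyticAt ℂ (G N) s ∧ G N s ≠ 0) ∧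
      ∀ n : ℕ, ordAt (G N) (-(n : ℂ)) (BHaux.ordZ N n) := by
  induction N with
  | zero =>
    have h0 : ∀ s, G 0 s = s⁻¹ := hG.1
    constructor
    · intro s hs
      have hs0 : s ≠ 0 := by simpa using hs 0
      have : AnalyticAt ℂ (fun s : ℂ => s⁻¹) s := analyticAt_id.inv hs0
      refine ⟨this.congr ?_, by rw [h0]; exact inv_ne_zero hs0⟩
      filter_upwards with z using (h0 z).symm
    · intro n
      rcases n with _ | m
      · refine ⟨fun _ => 1, analyticAt_const, one_ne_zero, ?_⟩
        filter_upwards [self_mem_nhdsWithin] with z hz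
        have hz0 : z ≠ 0 := by simpa using hz
        simp [BHaux.ordZ, h0 z, zpow_neg]
      · have hn0 : (-(((m : ℕ) + 1 : ℕ) : ℂ)) ≠ 0 := by
          rw [neg_ne_zero, Nat.cast_ne_zero]
          exact Nat.succ_ne_zero m
        refine ⟨fun z => z⁻¹, analyticAt_id.inv hn0, inv_ne_zero hn0, ?_⟩
        filter_upwards with z
        simp [BHaux.ordZ, h0 z]
  | succ N IH =>
    obtain ⟨IH1, IH2⟩ := IH
    obtain ⟨hMero, hLLD, -, hOne, hEqn⟩ := hG.2 N
    have hf1 : G (N + 1) 1 ≠ 0 := by rw [hOne]; exact one_ne_zero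
    have hfne : ∀ ρ : ℂ, ∀ᶠ z in 𝓝[≠] ρ, G (N + 1) z ≠ 0 :=
      fun ρ => BHaux.mero_ne hMero.1 hf1 ρ
    have heq : ∀ z : ℂ, G N z ≠ 0 → G (N + 1) z ≠ 0 →
        G (N + 1) z = G N z * G (N + 1) (z + 1) := by
      intro z h1 h2
      rw [hEqn z h1 h2, ← mul_assoc, mul_inv_cancel₀ h1, one_mul]
    have Q : ∀ n : ℕ,
        (∀ s : ℂ, -(n : ℝ) < s.re → (∀ k : ℕ, s ≠ -(k : ℂ)) →
          AnalyticAt ℂ (G (N + 1)) s ∧ G (N + 1) s ≠ 0) ∧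
        (∀ k : ℕ, k < n → ordAt (G (N + 1)) (-(k : ℂ)) (BHaux.ordZ (N + 1) k)) := by
      intro n
      induction n with
      | zero =>
        exact ⟨fun s hs _ => hLLD s (by simpa using hs),
          fun k hk => absurd hk (Nat.not_lt_zero k)⟩
      | succ n IHn =>
        obtain ⟨Qa, Qb⟩ := IHn
        constructor
        · intro s hs hsk
          have hs1 : ∀ k : ℕ, s + 1 ≠ -(k : ℂ) := by
            intro k h
            refine hsk (k + 1) ?_
            push_cast
            linear_combination h
          have hfa : AnalyticAt ℂ (G (N + 1)) (s + 1) ∧ G (N + 1) (s + 1) ≠ 0 := by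
            refine Qa (s + 1) ?_ hs1
            simp only [Complex.add_re, Complex.one_re]
            push_cast at hs
            linarith
          have hGNa := IH1 s hsk
          have hphia : AnalyticAt ℂ (fun z => G N z * G (N + 1) (z + 1)) s :=
            hGNa.1.mul (BHaux.analytic_shift hfa.1)
          have hGNev : ∀ᶠ z in 𝓝[≠] s, G N z ≠ 0 :=
            (hGNa.1.continuousAt.eventually_ne hGNa.2).filter_mono nhdsWithin_le_nhds
          have hfeq : ∀ᶠ z in 𝓝[≠] s, G (N + 1) z = G N z * G (N + 1) (z + 1) := by
            filter_upwards [hGNev, hfne s] with z h1 h2 using heq z h1 h2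
          have hphicont : Tendsto (fun z => G N z * G (N + 1) (z + 1)) (𝓝[≠] s)
              (𝓝 (G N s * G (N + 1) (s + 1))) :=
            hphia.continuousAt.continuousWithinAt
          have htf : Tendsto (G (N + 1)) (𝓝[≠] s) (𝓝 (G N s * G (N + 1) (s + 1))) :=
            hphicont.congr' (by filter_upwards [hfeq] with z h using h.symm)
          rcases hMero.2 s with hA | ⟨hpole, -⟩
          · have hcont : Tendsto (G (N + 1)) (𝓝[≠] s) (𝓝 (G (N + 1) s)) :=
              hA.continuousAt.continuousWithinAt
            have hval : G (N + 1) s = G N s * G (N + 1) (s + 1) :=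
              tendsto_nhds_unique hcont htf
            exact ⟨hA, hval ▸ mul_ne_zero hGNa.2 hfa.2⟩
          · exact absurd hpole (not_tendsto_atTop_of_tendsto_nhds htf.norm)
        · intro k hk
          rcases Nat.lt_succ_iff_lt_or_eq.mp hk with hk' | rfl
          · exact Qb k hk'
          · have hBord : ordAt (G (N + 1)) ((-(k : ℂ)) + 1)
                (if k = 0 then 0 else BHaux.ordZ (N + 1) (k - 1)) := by
              rcases k with _ | m
              · have h1 := hLLD 1 (by norm_num)
                have : (-((0 : ℕ) : ℂ)) + 1 = 1 := by norm_num
                rw [this]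
                simpa using BHaux.ordAt_of_analytic h1.1 h1.2
              · have hpt : (-(((m : ℕ) + 1 : ℕ) : ℂ)) + 1 = -((m : ℕ) : ℂ) := by
                  push_cast
                  ring
                rw [hpt]
                simpa using Qb m (Nat.lt_succ_self m)
            have hfeqn : ∀ᶠ z in 𝓝[≠] (-(k : ℂ)),
                G (N + 1) z = G N z * G (N + 1) (z + 1) := by
              filter_upwards [BHaux.ordAt_ne (IH2 k), hfne (-(k : ℂ))] with z h1 h2
                using heq z h1 h2
            have := BHaux.ordAt_mul_shift (IH2 k) hBord hfeqn
            rwa [← BHaux.ordZ_succ] at this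
    constructor
    · intro s hs
      obtain ⟨n, hn⟩ := exists_nat_gt (-s.re)
      exact (Q n).1 s (by linarith) hs
    · intro n
      exact (Q (n + 1)).2 n (Nat.lt_succ_self n)

/-- The divisor of the Barnes higher Gamma function `Γ_N` is supported on the
non-positive integers, with order `-C(n+N-1, N-1)` at `s = -n`. -/
theorem barnes_higher_gamma_divisor (G : ℕ → ℂ → ℂ) (hG : BarnesHier G) :
    ∀ N : ℕ, 1 ≤ N →
      (∀ s : ℂ, (∀ n : ℕ, s ≠ -(n : ℂ)) → AnalyticAt ℂ (G N) s ∧ G N s ≠ 0) ∧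
        ∀ n : ℕ, ordAt (G N) (-(n : ℂ)) (-(Nat.choose (n + N - 1) (N - 1) : ℤ)) := by
  intro N hN
  obtain ⟨M, rfl⟩ : ∃ M, N = M + 1 := ⟨N - 1, by omega⟩
  obtain ⟨h1, h2⟩ := BHaux.key G hG (M + 1)
  refine ⟨h1, fun n => ?_⟩
  have e : n + (M + 1) - 1 = n + M := by omega
  rw [e, Nat.add_sub_cancel]
  simpa [BHaux.ordZ] using h2 n
end
end
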